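/- Let Q and R be semi-unital quantales with Q left-sided and R right-sided, and let ϑ_Q : Q → R, ϑ_R : R → Q be mutually inverse join-preserving anti-homomorphisms. An element p of the tensor product Q ⊗ R is a hermitian prime element (with respect to the involution ℓ(α ⊗ β) = ϑ_R(β) ⊗ ϑ_Q(α)) if and only if there exists a prime element q of Q such that p = (q ⊗ ⊤) ∨ (⊤ ⊗ ϑ_Q(q)). -/

import Mathlib

/-- A quantale: a complete lattice with an associative multiplication that
preserves arbitrary joins in each variable. -/
class QuantaleOld (α : Type*) extends CompleteLattice α, Semigroup α where
  mul_sSup_eq : ∀ (a : α) (s : Set α), a * sSup s = ⨆ b ∈ s, a * b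
  sSup_mul_eq : ∀ (s : Set α) (a : α), sSup s * a = ⨆ b ∈ s, b * a

section Defs

variable {α : Type*} [QuantaleOld α]

/-- `a` is left-sided: `⊤ * a ≤ a`. -/
def IsLeftSided (a : α) : Prop := ⊤ * a ≤ a

/-- `a` is right-sided: `a * ⊤ ≤ a`. -/
def IsRightSided (a : α) : Prop := a * ⊤ ≤ a

/-- `a` is two-sided. -/
def IsTwoSided (a : α) : Prop := IsLeftSided a ∧ IsRightSided a

/-- A quantale is semi-unital if `a ≤ ⊤ * a` and `a ≤ a * ⊤` for all `a`. -/
def SemiUnital (α : Type*) [QuantaleOld α] : Prop := ∀ a : α, a ≤ ⊤ * a ∧ a ≤ a * ⊤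

/-- A quantale is semi-integral if `a * ⊤ * b ≤ a * b` for all `a`, `b`. -/
def SemiIntegral (α : Type*) [QuantaleOld α] : Prop := ∀ a b : α, a * ⊤ * b ≤ a * b

/-- A quantale is a factor if its only two-sided elements are `⊥` and `⊤`. -/
def IsFactor (α : Type*) [QuantaleOld α] : Prop := ∀ a : α, IsTwoSided a → a = ⊥ ∨ a = ⊤

/-- Prime element of a quantale. -/
def IsPrime (p : α) : Prop :=
  p ≠ ⊤ ∧ ∀ a b : α, a * b ≤ p → a * ⊤ ≤ p ∨ ⊤ * b ≤ p

/-- Strongly prime element of a quantale. -/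
def IsStronglyPrime (p : α) : Prop :=
  p ≠ ⊤ ∧ ∀ a b : α, a * b ≤ p → a ⊔ a * ⊤ ≤ p ∨ b ⊔ ⊤ * b ≤ p

/-- A quantale is spatial if every element is a meet of prime elements. -/
def Spatial (α : Type*) [QuantaleOld α] : Prop :=
  ∀ a : α, ∃ S : Set α, (∀ p ∈ S, IsPrime p) ∧ a = sInf S

/-- A quantale is strongly spatial if every element is a meet of strongly prime elements. -/
def StronglySpatial (α : Type*) [QuantaleOld α] : Prop :=
  ∀ a : α, ∃ S : Set α, (∀ p ∈ S, IsStronglyPrime p) ∧ a = sInf S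

end Defs


/-!
Write `a ⊗ b` for `tmul a b`. When `⊤ * a = a` in `Q` and `b * ⊤ = b` in `R`, every pure
tensor factors as `a ⊗ b = (⊤ ⊗ b) * (a ⊗ ⊤)`. Hence a prime `p` lies above `a ⊗ b` only if it
lies above `a ⊗ ⊤` or `⊤ ⊗ b`, so `p = (q ⊗ ⊤) ⊔ (⊤ ⊗ r)` for the largest such `q` and `r`,
and these are prime. Conversely such a join is prime: the universal property yields a
two-valued join-preserving functional showing that `a ⊗ b ≤ (q ⊗ ⊤) ⊔ (⊤ ⊗ r)` only if
`a ≤ q` or `b ≤ r`, which also makes the pair `(q, r)` unique. The involution sends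
`(q ⊗ ⊤) ⊔ (⊤ ⊗ r)` to `(ϑR r ⊗ ⊤) ⊔ (⊤ ⊗ ϑQ q)`, so such a prime is hermitian exactly when
`r = ϑQ q`, and `ϑQ q` is prime whenever `q` is.
-/

section JoinPreserving

variable {α β : Type*} [CompleteLattice α] [CompleteLattice β] {f : α → β}

theorem map_sup_of_map_sSup (hf : ∀ s, f (sSup s) = ⨆ x ∈ s, f x) (x y : α) :
    f (x ⊔ y) = f x ⊔ f y := by
  simpa [iSup_or, iSup_sup_eq] using hf {x, y}

theorem monotone_of_map_sSup (hf : ∀ s, f (sSup s) = ⨆ x ∈ s, f x) : Monotone f :=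
  fun x y hxy => by
    rw [← sup_eq_right.2 hxy, map_sup_of_map_sSup hf]
    exact le_sup_left

theorem map_le_iff_le_sSup_of_map_sSup (hf : ∀ s, f (sSup s) = ⨆ x ∈ s, f x)
    {a : α} {b : β} : f a ≤ b ↔ a ≤ sSup {x | f x ≤ b} :=
  ⟨fun h => le_sSup h, fun h =>
    (monotone_of_map_sSup hf h).trans ((hf _).trans_le (iSup₂_le fun _ hx => hx))⟩

end JoinPreserving

namespace QuantaleOld

variable {α : Type*} [QuantaleOld α]

theorem mul_le_mul {a b c d : α} (hab : a ≤ b) (hcd : c ≤ d) : a * c ≤ b * d :=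
  (monotone_of_map_sSup (f := (· * c)) (sSup_mul_eq · c) hab).trans
    (monotone_of_map_sSup (mul_sSup_eq b) hcd)

end QuantaleOld

theorem IsPrime.map_orderIso_of_map_mul_rev {Q R : Type*} [QuantaleOld Q] [QuantaleOld R]
    (e : Q ≃o R) (he : ∀ a b, e (a * b) = e b * e a) {q : Q} (hq : IsPrime q) :
    IsPrime (e q) := by
  have he_symm : ∀ a b, e.symm (a * b) = e.symm b * e.symm a :=
    fun a b => e.injective (by simp [he])
  refine ⟨(map_eq_top_iff e).not.2 hq.1, fun a b hab => ?_⟩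
  have hba : e.symm b * e.symm a ≤ q := by
    rw [← he_symm]
    exact e.symm_apply_le.2 hab
  rcases hq.2 _ _ hba with h | h
  · right
    simpa [he] using e.monotone h
  · left
    simpa [he] using e.monotone h

section Generation

variable {Q R T : Type*} [QuantaleOld T] {tmul : Q → R → T}

theorem le_of_forall_tmul_le (hgen : ∀ t : T, ∃ s : Set (Q × R), t = ⨆ p ∈ s, tmul p.1 p.2)
    {x y : T} (h : ∀ a b, tmul a b ≤ x → tmul a b ≤ y) : x ≤ y := by
  obtain ⟨s, rfl⟩ := hgen x
  exact iSup₂_le fun z hz => h _ _ (le_iSup₂ (f := fun z (_ : z ∈ s) => tmul z.1 z.2) z hz)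

theorem mul_le_of_forall_tmul_le_left
    (hgen : ∀ t : T, ∃ s : Set (Q × R), t = ⨆ p ∈ s, tmul p.1 p.2)
    {x y p : T} (h : ∀ a b, tmul a b ≤ x → tmul a b * y ≤ p) : x * y ≤ p := by
  obtain ⟨s, rfl⟩ := hgen x
  rw [← sSup_image, QuantaleOld.sSup_mul_eq]
  refine iSup₂_le ?_
  rintro _ ⟨z, hz, rfl⟩
  exact h _ _ (le_iSup₂ (f := fun z (_ : z ∈ s) => tmul z.1 z.2) z hz)

theorem mul_le_of_forall_tmul_le_right
    (hgen : ∀ t : T, ∃ s : Set (Q × R), t = ⨆ p ∈ s, tmul p.1 p.2)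
    {x y p : T} (h : ∀ a b, tmul a b ≤ y → x * tmul a b ≤ p) : x * y ≤ p := by
  obtain ⟨s, rfl⟩ := hgen y
  rw [← sSup_image, QuantaleOld.mul_sSup_eq]
  refine iSup₂_le ?_
  rintro _ ⟨z, hz, rfl⟩
  exact h _ _ (le_iSup₂ (f := fun z (_ : z ∈ s) => tmul z.1 z.2) z hz)

end Generation

section TensorProduct

variable {Q R T : Type*} [QuantaleOld Q] [QuantaleOld R] [QuantaleOld T] {tmul : Q → R → T}

theorem tmul_mono (htmulL : ∀ (s : Set Q) (b : R), tmul (sSup s) b = ⨆ a ∈ s, tmul a b)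
    (htmulR : ∀ (a : Q) (s : Set R), tmul a (sSup s) = ⨆ b ∈ s, tmul a b)
    {a a' : Q} {b b' : R} (ha : a ≤ a') (hb : b ≤ b') : tmul a b ≤ tmul a' b' :=
  (monotone_of_map_sSup (f := (tmul · b)) (htmulL · b) ha).trans
    (monotone_of_map_sSup (htmulR a') hb)

theorem top_eq_tmul_top (htmulL : ∀ (s : Set Q) (b : R), tmul (sSup s) b = ⨆ a ∈ s, tmul a b)
    (htmulR : ∀ (a : Q) (s : Set R), tmul a (sSup s) = ⨆ b ∈ s, tmul a b)
    (hgen : ∀ t : T, ∃ s : Set (Q × R), t = ⨆ p ∈ s, tmul p.1 p.2) :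
    (⊤ : T) = tmul ⊤ ⊤ :=
  (top_unique (le_of_forall_tmul_le hgen fun _ _ _ => tmul_mono htmulL htmulR le_top le_top)).symm

theorem isPrime_sSup_tmul_top_le
    (htmulL : ∀ (s : Set Q) (b : R), tmul (sSup s) b = ⨆ a ∈ s, tmul a b)
    (htmulMul : ∀ (a₁ a₂ : Q) (b₁ b₂ : R),
      tmul a₁ b₁ * tmul a₂ b₂ = tmul (a₁ * a₂) (b₁ * b₂))
    (htop : (⊤ : T) = tmul ⊤ ⊤) (hR : (⊤ : R) * ⊤ = ⊤) {p : T} (hp : IsPrime p) :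
    IsPrime (sSup {a | tmul a ⊤ ≤ p}) := by
  have hle : ∀ a, tmul a ⊤ ≤ p ↔ a ≤ sSup {a | tmul a ⊤ ≤ p} := fun a =>
    map_le_iff_le_sSup_of_map_sSup (f := (tmul · ⊤)) (htmulL · ⊤)
  refine ⟨fun hq => hp.1 (top_unique ?_), fun a b hab => ?_⟩
  · rw [htop]
    exact (hle ⊤).2 hq.ge
  have hab' : tmul a ⊤ * tmul b ⊤ ≤ p := by
    rw [htmulMul, hR]
    exact (hle _).2 hab
  rcases hp.2 _ _ hab' with h | h
  · rw [htop, htmulMul, hR] at h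
    exact Or.inl ((hle _).1 h)
  · rw [htop, htmulMul, hR] at h
    exact Or.inr ((hle _).1 h)

theorem isPrime_sSup_top_tmul_le
    (htmulR : ∀ (a : Q) (s : Set R), tmul a (sSup s) = ⨆ b ∈ s, tmul a b)
    (htmulMul : ∀ (a₁ a₂ : Q) (b₁ b₂ : R),
      tmul a₁ b₁ * tmul a₂ b₂ = tmul (a₁ * a₂) (b₁ * b₂))
    (htop : (⊤ : T) = tmul ⊤ ⊤) (hQ : (⊤ : Q) * ⊤ = ⊤) {p : T} (hp : IsPrime p) :
    IsPrime (sSup {b | tmul ⊤ b ≤ p}) := by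
  have hle : ∀ b, tmul ⊤ b ≤ p ↔ b ≤ sSup {b | tmul ⊤ b ≤ p} := fun b =>
    map_le_iff_le_sSup_of_map_sSup (htmulR ⊤)
  refine ⟨fun hr => hp.1 (top_unique ?_), fun a b hab => ?_⟩
  · rw [htop]
    exact (hle ⊤).2 hr.ge
  have hab' : tmul ⊤ a * tmul ⊤ b ≤ p := by
    rw [htmulMul, hQ]
    exact (hle _).2 hab
  rcases hp.2 _ _ hab' with h | h
  · rw [htop, htmulMul, hQ] at h
    exact Or.inl ((hle _).1 h)
  · rw [htop, htmulMul, hQ] at h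
    exact Or.inr ((hle _).1 h)

theorem le_sup_tmul_of_isPrime
    (hQ : ∀ a : Q, ⊤ * a = a) (hR : ∀ b : R, b * ⊤ = b)
    (htmulL : ∀ (s : Set Q) (b : R), tmul (sSup s) b = ⨆ a ∈ s, tmul a b)
    (htmulR : ∀ (a : Q) (s : Set R), tmul a (sSup s) = ⨆ b ∈ s, tmul a b)
    (htmulMul : ∀ (a₁ a₂ : Q) (b₁ b₂ : R),
      tmul a₁ b₁ * tmul a₂ b₂ = tmul (a₁ * a₂) (b₁ * b₂))
    (hgen : ∀ t : T, ∃ s : Set (Q × R), t = ⨆ p ∈ s, tmul p.1 p.2)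
    {p : T} (hp : IsPrime p) :
    p ≤ tmul (sSup {a | tmul a ⊤ ≤ p}) ⊤ ⊔ tmul ⊤ (sSup {b | tmul ⊤ b ≤ p}) := by
  have htop := top_eq_tmul_top htmulL htmulR hgen
  refine le_of_forall_tmul_le hgen fun a b hab => ?_
  have hfac : tmul ⊤ b * tmul a ⊤ ≤ p := by rwa [htmulMul, hQ, hR]
  rcases hp.2 _ _ hfac with h | h
  · rw [htop, htmulMul, hQ, hR] at h
    exact le_sup_of_le_right <| tmul_mono htmulL htmulR le_top <|
      (map_le_iff_le_sSup_of_map_sSup (htmulR ⊤)).1 h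
  · rw [htop, htmulMul, hQ, hR] at h
    exact le_sup_of_le_left <| tmul_mono htmulL htmulR
      ((map_le_iff_le_sSup_of_map_sSup (f := (tmul · ⊤)) (htmulL · ⊤)).1 h) le_top

theorem exists_eq_sup_tmul_of_isPrime
    (hQ : ∀ a : Q, ⊤ * a = a) (hR : ∀ b : R, b * ⊤ = b)
    (htmulL : ∀ (s : Set Q) (b : R), tmul (sSup s) b = ⨆ a ∈ s, tmul a b)
    (htmulR : ∀ (a : Q) (s : Set R), tmul a (sSup s) = ⨆ b ∈ s, tmul a b)
    (htmulMul : ∀ (a₁ a₂ : Q) (b₁ b₂ : R),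
      tmul a₁ b₁ * tmul a₂ b₂ = tmul (a₁ * a₂) (b₁ * b₂))
    (hgen : ∀ t : T, ∃ s : Set (Q × R), t = ⨆ p ∈ s, tmul p.1 p.2)
    {p : T} (hp : IsPrime p) :
    ∃ q r, IsPrime q ∧ IsPrime r ∧ p = tmul q ⊤ ⊔ tmul ⊤ r := by
  have htop := top_eq_tmul_top htmulL htmulR hgen
  refine ⟨_, _, isPrime_sSup_tmul_top_le htmulL htmulMul htop (hR ⊤) hp,
    isPrime_sSup_top_tmul_le htmulR htmulMul htop (hQ ⊤) hp,
    (le_sup_tmul_of_isPrime hQ hR htmulL htmulR htmulMul hgen hp).antisymm (sup_le ?_ ?_)⟩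
  · exact (map_le_iff_le_sSup_of_map_sSup (f := (tmul · ⊤)) (htmulL · ⊤)).2 le_rfl
  · exact (map_le_iff_le_sSup_of_map_sSup (htmulR ⊤)).2 le_rfl

end TensorProduct

section UniversalProperty

variable {Q R : Type*} [QuantaleOld Q] [QuantaleOld R] {T : Type u} [QuantaleOld T]
  {tmul : Q → R → T}

theorem le_or_le_of_tmul_le_sup
    (huniv : ∀ (S : Type u) [CompleteLattice S] (f : Q → R → S),
      (∀ (s : Set Q) (b : R), f (sSup s) b = ⨆ a ∈ s, f a b) →
      (∀ (a : Q) (s : Set R), f a (sSup s) = ⨆ b ∈ s, f a b) →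
      ∃! g : T → S,
        (∀ s : Set T, g (sSup s) = ⨆ x ∈ s, g x) ∧ ∀ a b, g (tmul a b) = f a b)
    {a q : Q} {b r : R} (h : tmul a b ≤ tmul q ⊤ ⊔ tmul ⊤ r) : a ≤ q ∨ b ≤ r := by
  obtain ⟨g, ⟨hg, hgtmul⟩, -⟩ :=
    huniv (Set PUnit) (fun a b => {_x | ¬a ≤ q ∧ ¬b ≤ r})
      (fun s b => by ext; simp [sSup_le_iff]; aesop) (fun a s => by ext; simp [sSup_le_iff])
  have hgh := monotone_of_map_sSup hg h
  rw [map_sup_of_map_sSup hg, hgtmul, hgtmul, hgtmul] at hgh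
  by_contra! hab
  simpa using @hgh PUnit.unit hab

theorem le_and_le_of_sup_tmul_le
    (huniv : ∀ (S : Type u) [CompleteLattice S] (f : Q → R → S),
      (∀ (s : Set Q) (b : R), f (sSup s) b = ⨆ a ∈ s, f a b) →
      (∀ (a : Q) (s : Set R), f a (sSup s) = ⨆ b ∈ s, f a b) →
      ∃! g : T → S,
        (∀ s : Set T, g (sSup s) = ⨆ x ∈ s, g x) ∧ ∀ a b, g (tmul a b) = f a b)
    {q q' : Q} {r r' : R} (hq' : q' ≠ ⊤) (hr' : r' ≠ ⊤)
    (h : tmul q ⊤ ⊔ tmul ⊤ r ≤ tmul q' ⊤ ⊔ tmul ⊤ r') : q ≤ q' ∧ r ≤ r' :=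
  ⟨(le_or_le_of_tmul_le_sup huniv (le_sup_left.trans h)).resolve_right (hr' ∘ top_unique),
    (le_or_le_of_tmul_le_sup huniv (le_sup_right.trans h)).resolve_left (hq' ∘ top_unique)⟩

theorem eq_and_eq_of_sup_tmul_eq
    (huniv : ∀ (S : Type u) [CompleteLattice S] (f : Q → R → S),
      (∀ (s : Set Q) (b : R), f (sSup s) b = ⨆ a ∈ s, f a b) →
      (∀ (a : Q) (s : Set R), f a (sSup s) = ⨆ b ∈ s, f a b) →
      ∃! g : T → S,
        (∀ s : Set T, g (sSup s) = ⨆ x ∈ s, g x) ∧ ∀ a b, g (tmul a b) = f a b)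
    {q q' : Q} {r r' : R} (hq : q ≠ ⊤) (hr : r ≠ ⊤) (hq' : q' ≠ ⊤) (hr' : r' ≠ ⊤)
    (h : tmul q ⊤ ⊔ tmul ⊤ r = tmul q' ⊤ ⊔ tmul ⊤ r') : q = q' ∧ r = r' :=
  have hle := le_and_le_of_sup_tmul_le huniv hq' hr' h.le
  have hge := le_and_le_of_sup_tmul_le huniv hq hr h.ge
  ⟨hle.1.antisymm hge.1, hle.2.antisymm hge.2⟩

theorem isPrime_sup_tmul
    (htmulL : ∀ (s : Set Q) (b : R), tmul (sSup s) b = ⨆ a ∈ s, tmul a b)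
    (htmulR : ∀ (a : Q) (s : Set R), tmul a (sSup s) = ⨆ b ∈ s, tmul a b)
    (htmulMul : ∀ (a₁ a₂ : Q) (b₁ b₂ : R),
      tmul a₁ b₁ * tmul a₂ b₂ = tmul (a₁ * a₂) (b₁ * b₂))
    (hgen : ∀ t : T, ∃ s : Set (Q × R), t = ⨆ p ∈ s, tmul p.1 p.2)
    (huniv : ∀ (S : Type u) [CompleteLattice S] (f : Q → R → S),
      (∀ (s : Set Q) (b : R), f (sSup s) b = ⨆ a ∈ s, f a b) →
      (∀ (a : Q) (s : Set R), f a (sSup s) = ⨆ b ∈ s, f a b) →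
      ∃! g : T → S,
        (∀ s : Set T, g (sSup s) = ⨆ x ∈ s, g x) ∧ ∀ a b, g (tmul a b) = f a b)
    {q : Q} {r : R} (hq : IsPrime q) (hr : IsPrime r) : IsPrime (tmul q ⊤ ⊔ tmul ⊤ r) := by
  have htop := top_eq_tmul_top htmulL htmulR hgen
  refine ⟨fun hp => ?_, fun x y hxy => or_iff_not_imp_left.2 fun hx => ?_⟩
  · rcases le_or_le_of_tmul_le_sup huniv (htop.symm.trans hp.symm).le with h | h
    exacts [hq.1 (top_unique h), hr.1 (top_unique h)]
  obtain ⟨a, b, habx, hab⟩ :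
      ∃ a b, tmul a b ≤ x ∧ ¬tmul a b * ⊤ ≤ tmul q ⊤ ⊔ tmul ⊤ r := by
    by_contra! h
    exact hx (mul_le_of_forall_tmul_le_left hgen h)
  rw [htop, htmulMul] at hab
  have ha : ¬a * ⊤ ≤ q := fun h => hab (le_sup_of_le_left (tmul_mono htmulL htmulR h le_top))
  have hb : ¬b * ⊤ ≤ r := fun h => hab (le_sup_of_le_right (tmul_mono htmulL htmulR le_top h))
  refine mul_le_of_forall_tmul_le_right hgen fun c d hcdy => ?_
  have hprod : tmul (a * c) (b * d) ≤ tmul q ⊤ ⊔ tmul ⊤ r := by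
    rw [← htmulMul]
    exact (QuantaleOld.mul_le_mul habx hcdy).trans hxy
  rw [htop, htmulMul]
  rcases le_or_le_of_tmul_le_sup huniv hprod with h | h
  · exact le_sup_of_le_left (tmul_mono htmulL htmulR ((hq.2 _ _ h).resolve_left ha) le_top)
  · exact le_sup_of_le_right (tmul_mono htmulL htmulR le_top ((hr.2 _ _ h).resolve_left hb))

end UniversalProperty

theorem stmt13_general {Q R T : Type u} [QuantaleOld Q] [QuantaleOld R] [QuantaleOld T]
    (hQls : ∀ a : Q, IsLeftSided a) (hQsu : SemiUnital Q)
    (hRrs : ∀ b : R, IsRightSided b) (hRsu : SemiUnital R)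
    (tmul : Q → R → T)
    (htmulL : ∀ (s : Set Q) (b : R), tmul (sSup s) b = ⨆ a ∈ s, tmul a b)
    (htmulR : ∀ (a : Q) (s : Set R), tmul a (sSup s) = ⨆ b ∈ s, tmul a b)
    (htmulMul : ∀ (a₁ a₂ : Q) (b₁ b₂ : R),
      tmul a₁ b₁ * tmul a₂ b₂ = tmul (a₁ * a₂) (b₁ * b₂))
    (hgen : ∀ t : T, ∃ s : Set (Q × R), t = ⨆ p ∈ s, tmul p.1 p.2)
    (huniv : ∀ (S : Type u) [CompleteLattice S] (f : Q → R → S),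
      (∀ (s : Set Q) (b : R), f (sSup s) b = ⨆ a ∈ s, f a b) →
      (∀ (a : Q) (s : Set R), f a (sSup s) = ⨆ b ∈ s, f a b) →
      ∃! g : T → S, (∀ s : Set T, g (sSup s) = ⨆ x ∈ s, g x) ∧ ∀ a b, g (tmul a b) = f a b)
    (ϑQ : Q → R) (ϑR : R → Q)
    (hϑQjoin : ∀ s : Set Q, ϑQ (sSup s) = ⨆ a ∈ s, ϑQ a)
    (hϑRjoin : ∀ s : Set R, ϑR (sSup s) = ⨆ b ∈ s, ϑR b)
    (hϑQanti : ∀ a b : Q, ϑQ (a * b) = ϑQ b * ϑQ a)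
    (hRQ : ∀ a : Q, ϑR (ϑQ a) = a) (hQR : ∀ b : R, ϑQ (ϑR b) = b)
    (ℓ : T → T)
    (hℓjoin : ∀ s : Set T, ℓ (sSup s) = ⨆ x ∈ s, ℓ x)
    (hℓ : ∀ (a : Q) (b : R), ℓ (tmul a b) = tmul (ϑR b) (ϑQ a)) :
    ∀ p : T, (IsPrime p ∧ ℓ p = p) ↔
      ∃ q : Q, IsPrime q ∧ p = tmul q ⊤ ⊔ tmul ⊤ (ϑQ q) := by
  have hQ : ∀ a : Q, ⊤ * a = a := fun a => (hQls a).antisymm (hQsu a).1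
  have hR : ∀ b : R, b * ⊤ = b := fun b => (hRrs b).antisymm (hRsu b).2
  let e : Q ≃o R := Equiv.toOrderIso ⟨ϑQ, ϑR, hRQ, hQR⟩
    (monotone_of_map_sSup hϑQjoin) (monotone_of_map_sSup hϑRjoin)
  have hℓ_sup : ∀ q r, ℓ (tmul q ⊤ ⊔ tmul ⊤ r) = tmul (ϑR r) ⊤ ⊔ tmul ⊤ (ϑQ q) := by
    intro q r
    rw [map_sup_of_map_sSup hℓjoin, hℓ, hℓ, show ϑQ ⊤ = ⊤ from e.map_top,
      show ϑR ⊤ = ⊤ from e.symm.map_top, sup_comm]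
  intro p
  constructor
  · rintro ⟨hp, hℓp⟩
    obtain ⟨q, r, hq, hr, rfl⟩ :=
      exists_eq_sup_tmul_of_isPrime hQ hR htmulL htmulR htmulMul hgen hp
    rw [hℓ_sup] at hℓp
    have hϑQq : ϑQ q ≠ ⊤ := (map_eq_top_iff e).not.2 hq.1
    have hϑRr : ϑR r ≠ ⊤ := (map_eq_top_iff e.symm).not.2 hr.1
    obtain ⟨-, hr_eq⟩ := eq_and_eq_of_sup_tmul_eq huniv hϑRr hϑQq hq.1 hr.1 hℓp
    exact ⟨q, hq, by rw [hr_eq]⟩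
  · rintro ⟨q, hq, rfl⟩
    exact ⟨isPrime_sup_tmul htmulL htmulR htmulMul hgen huniv hq
      (hq.map_orderIso_of_map_mul_rev e hϑQanti), by rw [hℓ_sup, hRQ]⟩

/-- Let `Q` (left-sided, semi-unital) and `R` (right-sided, semi-unital)
be quantales, `ϑQ, ϑR` mutually inverse join-preserving anti-homomorphisms, and let
`ℓ` be the involution of the tensor product `T = Q ⊗ R` determined by
`ℓ (α ⊗ β) = ϑR β ⊗ ϑQ α`.  Then `p ∈ T` is a hermitian prime element iff there is a
prime element `q` of `Q` with `p = (q ⊗ ⊤) ⊔ (⊤ ⊗ ϑQ q)`. -/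
theorem stmt13 {Q R T : Type u} [QuantaleOld Q] [QuantaleOld R] [QuantaleOld T]
    (hQls : ∀ a : Q, IsLeftSided a) (hQsu : SemiUnital Q)
    (hRrs : ∀ b : R, IsRightSided b) (hRsu : SemiUnital R)
    (tmul : Q → R → T)
    (htmulL : ∀ (s : Set Q) (b : R), tmul (sSup s) b = ⨆ a ∈ s, tmul a b)
    (htmulR : ∀ (a : Q) (s : Set R), tmul a (sSup s) = ⨆ b ∈ s, tmul a b)
    (htmulMul : ∀ (a₁ a₂ : Q) (b₁ b₂ : R),
      tmul a₁ b₁ * tmul a₂ b₂ = tmul (a₁ * a₂) (b₁ * b₂))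
    (hgen : ∀ t : T, ∃ s : Set (Q × R), t = ⨆ p ∈ s, tmul p.1 p.2)
    (huniv : ∀ (S : Type u) [CompleteLattice S] (f : Q → R → S),
      (∀ (s : Set Q) (b : R), f (sSup s) b = ⨆ a ∈ s, f a b) →
      (∀ (a : Q) (s : Set R), f a (sSup s) = ⨆ b ∈ s, f a b) →
      ∃! g : T → S, (∀ s : Set T, g (sSup s) = ⨆ x ∈ s, g x) ∧ ∀ a b, g (tmul a b) = f a b)
    (ϑQ : Q → R) (ϑR : R → Q)
    (hϑQjoin : ∀ s : Set Q, ϑQ (sSup s) = ⨆ a ∈ s, ϑQ a)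
    (hϑRjoin : ∀ s : Set R, ϑR (sSup s) = ⨆ b ∈ s, ϑR b)
    (hϑQanti : ∀ a b : Q, ϑQ (a * b) = ϑQ b * ϑQ a)
    (hϑRanti : ∀ a b : R, ϑR (a * b) = ϑR b * ϑR a)
    (hRQ : ∀ a : Q, ϑR (ϑQ a) = a) (hQR : ∀ b : R, ϑQ (ϑR b) = b)
    (ℓ : T → T)
    (hℓjoin : ∀ s : Set T, ℓ (sSup s) = ⨆ x ∈ s, ℓ x)
    (hℓ : ∀ (a : Q) (b : R), ℓ (tmul a b) = tmul (ϑR b) (ϑQ a)) :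
    ∀ p : T, (IsPrime p ∧ ℓ p = p) ↔
      ∃ q : Q, IsPrime q ∧ p = tmul q ⊤ ⊔ tmul ⊤ (ϑQ q) :=
  stmt13_general hQls hQsu hRrs hRsu tmul htmulL htmulR htmulMul hgen huniv ϑQ ϑR hϑQjoin hϑRjoin
    hϑQanti hRQ hQR ℓ hℓjoin hℓ
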